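/- Let S ⊆ ℝ be a convex set with nonempty interior and A : ℝ → ℝ a function that is convex on S, differentiable on the interior of S, and steep: |A'(μ_k)| → ∞ for every sequence μ_k in the interior of S converging to a finite boundary point of S. Define D(β) := sup_{μ ∈ S} (β·μ − A(μ)). Suppose β₀ := sup{β ∈ ℝ : D(β) < ∞} is finite and D(β₀) < ∞. Then S is unbounded above, A'(μ) increases to β₀ as μ → +∞ through the interior of S, and μ·β₀ − A(μ) → D(β₀) as μ → +∞. -/

import Mathlib

open Filter Set
open scoped Topology

noncomputable section

/-- The Legendre transform `D(β) = sup_{μ ∈ S} (β·μ − A(μ))` of `A` restricted to `S`,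
valued in the extended reals. -/
def legendre (S : Set ℝ) (A : ℝ → ℝ) (β : ℝ) : EReal :=
  ⨆ μ ∈ S, ((β * μ - A μ : ℝ) : EReal)

/-!
Every tangent line of `A` at an interior point `μ` supports `A` on `S`, so `D(A' μ)` is finite
and `A' ≤ β₀` on the interior. If `S` were bounded above, finiteness of `D` at one slope would
propagate to all larger slopes, contradicting the finiteness of `β₀`. If `A'` stayed below some
`L < β₀` near `+∞`, then `A` would grow at most with slope `L` and `D(β₀)` would be infinite.
Finally, `A' ≤ β₀` makes `μ ↦ β₀ μ − A μ` dominate its values to the left of `μ`, so it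
increases to its supremum over `S`, which is `D(β₀)`.
-/

section Legendre

variable {S : Set ℝ} {A : ℝ → ℝ}

lemma le_legendre {β μ : ℝ} (hμ : μ ∈ S) : ((β * μ - A μ : ℝ) : EReal) ≤ legendre S A β :=
  le_iSup₂ (f := fun μ (_ : μ ∈ S) => ((β * μ - A μ : ℝ) : EReal)) μ hμ

lemma legendre_le {β r : ℝ} (h : ∀ μ ∈ S, β * μ - A μ ≤ r) : legendre S A β ≤ r :=
  iSup₂_le fun μ hμ => EReal.coe_le_coe_iff.mpr (h μ hμ)

lemma legendre_ne_top_iff {β : ℝ} :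
    legendre S A β ≠ ⊤ ↔ ∃ r : ℝ, ∀ μ ∈ S, β * μ - A μ ≤ r := by
  refine ⟨fun h => ⟨(legendre S A β).toReal, fun μ hμ => ?_⟩, fun ⟨r, hr⟩ => ?_⟩
  · exact EReal.coe_le_coe_iff.mp ((le_legendre hμ).trans (EReal.le_coe_toReal h))
  · exact ne_top_of_le_ne_top (EReal.coe_ne_top r) (legendre_le hr)

lemma legendre_ne_top_of_bddAbove_of_le (hS : BddAbove S) {β₁ β : ℝ}
    (h₁ : legendre S A β₁ ≠ ⊤) (hβ : β₁ ≤ β) : legendre S A β ≠ ⊤ := by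
  obtain ⟨M, hM⟩ := hS
  obtain ⟨r, hr⟩ := legendre_ne_top_iff.mp h₁
  refine legendre_ne_top_iff.mpr ⟨r + (β - β₁) * M, fun μ hμ => ?_⟩
  have := mul_le_mul_of_nonneg_left (hM hμ) (sub_nonneg.mpr hβ)
  linarith [hr μ hμ]

end Legendre

lemma Convex.Ioi_subset_interior_of_not_bddAbove {S : Set ℝ} (hS : Convex ℝ S) {x : ℝ}
    (hx : x ∈ interior S) (hunb : ¬BddAbove S) : Ioi x ⊆ interior S := by
  intro y hxy
  obtain ⟨z, hz, hyz⟩ := not_bddAbove_iff.mp hunb y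
  refine hS.openSegment_interior_self_subset_interior hx hz ?_
  rw [openSegment_eq_Ioo (lt_trans hxy hyz)]
  exact ⟨hxy, hyz⟩

namespace ConvexOn

variable {S : Set ℝ} {A A' : ℝ → ℝ}

lemma monotoneOn_of_hasDerivAt (hA : ConvexOn ℝ S A)
    (hd : ∀ μ ∈ S, HasDerivAt A (A' μ) μ) : MonotoneOn A' S := by
  intro u hu v hv huv
  rcases eq_or_lt_of_le huv with rfl | huv
  · rfl
  exact (hA.le_slope_of_hasDerivAt hu hv huv (hd u hu)).trans
    (hA.slope_le_of_hasDerivAt hu hv huv (hd v hv))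

lemma add_mul_sub_le_of_hasDerivAt (hA : ConvexOn ℝ S A) {μ ν a : ℝ} (hμ : μ ∈ S) (hν : ν ∈ S)
    (hd : HasDerivAt A a μ) : A μ + a * (ν - μ) ≤ A ν := by
  rcases lt_trichotomy ν μ with h | rfl | h
  · have hs := hA.slope_le_of_hasDerivAt hν hμ h hd
    rw [slope_def_field, div_le_iff₀ (sub_pos.mpr h)] at hs
    linarith
  · simp
  · have hs := hA.le_slope_of_hasDerivAt hμ hν h hd
    rw [slope_def_field, le_div_iff₀ (sub_pos.mpr h)] at hs
    linarith

lemma legendre_eq_of_hasDerivAt (hA : ConvexOn ℝ S A) {μ a : ℝ} (hμ : μ ∈ S)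
    (hd : HasDerivAt A a μ) : legendre S A a = a * μ - A μ :=
  le_antisymm
    (legendre_le fun ν hν => by linear_combination hA.add_mul_sub_le_of_hasDerivAt hμ hν hd)
    (le_legendre hμ)

lemma mul_sub_le_mul_sub_of_hasDerivAt (hA : ConvexOn ℝ S A) {μ ν a β : ℝ} (hν : ν ∈ S)
    (hμ : μ ∈ S) (hνμ : ν ≤ μ) (hd : HasDerivAt A a μ) (ha : a ≤ β) :
    β * ν - A ν ≤ β * μ - A μ := by
  linear_combination hA.add_mul_sub_le_of_hasDerivAt hμ hν hd +
    mul_nonneg (sub_nonneg.mpr ha) (sub_nonneg.mpr hνμ)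

lemma legendre_eq_top_of_hasDerivAt_le (hA : ConvexOn ℝ S A) {x L β : ℝ} (hx : x ∈ S)
    (hIoi : Ioi x ⊆ S) (hd : ∀ μ ∈ Ioi x, HasDerivAt A (A' μ) μ) (hL : ∀ μ ∈ Ioi x, A' μ ≤ L)
    (hLβ : L < β) : legendre S A β = ⊤ := by
  have hgrowth : ∀ μ ∈ Ioi x, A μ ≤ A x + L * (μ - x) := fun μ hμ => by
    have hs := hA.slope_le_of_hasDerivAt hx (hIoi hμ) hμ (hd μ hμ)
    rw [slope_def_field, div_le_iff₀ (sub_pos.mpr hμ)] at hs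
    linarith [mul_le_mul_of_nonneg_right (hL μ hμ) (sub_pos.mpr hμ).le]
  refine not_not.mp fun hfin => ?_
  obtain ⟨r, hr⟩ := legendre_ne_top_iff.mp hfin
  have hlin : Tendsto (fun μ => (β - L) * μ + (L * x - A x)) atTop atTop :=
    tendsto_atTop_add_const_right _ _ (tendsto_id.const_mul_atTop (sub_pos.mpr hLβ))
  obtain ⟨μ, hμr, hμx⟩ := ((hlin.eventually_gt_atTop r).and (eventually_gt_atTop x)).exists
  linarith [hr μ (hIoi hμx), hgrowth μ hμx]

lemma tendsto_hasDerivAt_atTop (hA : ConvexOn ℝ S A) {x β : ℝ} (hx : x ∈ S)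
    (hIoi : Ioi x ⊆ S) (hd : ∀ μ ∈ Ioi x, HasDerivAt A (A' μ) μ) (hle : ∀ μ ∈ Ioi x, A' μ ≤ β)
    (hfin : legendre S A β ≠ ⊤) : Tendsto A' atTop (𝓝 β) := by
  have hmono := (hA.subset hIoi (convex_Ioi x)).monotoneOn_of_hasDerivAt hd
  refine tendsto_order.mpr ⟨fun b hb => ?_, fun b hb => ?_⟩
  · obtain ⟨μ₁, hμ₁, hb₁⟩ : ∃ μ₁ ∈ Ioi x, b < A' μ₁ := by
      by_contra! h
      exact hfin (hA.legendre_eq_top_of_hasDerivAt_le hx hIoi hd h hb)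
    filter_upwards [eventually_gt_atTop μ₁] with μ hμ
    exact hb₁.trans_le (hmono hμ₁ (lt_trans hμ₁ hμ) hμ.le)
  · filter_upwards [eventually_gt_atTop x] with μ hμ
    exact (hle μ hμ).trans_lt hb

lemma tendsto_mul_sub_legendre (hA : ConvexOn ℝ S A) {x β : ℝ} (hIoi : Ioi x ⊆ S)
    (hd : ∀ μ ∈ Ioi x, HasDerivAt A (A' μ) μ) (hle : ∀ μ ∈ Ioi x, A' μ ≤ β) :
    Tendsto (fun μ : ℝ => ((μ * β - A μ : ℝ) : EReal)) atTop (𝓝 (legendre S A β)) := by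
  refine tendsto_order.mpr ⟨fun b hb => ?_, fun b hb => ?_⟩
  · obtain ⟨ν, hν, hbν⟩ := lt_biSup_iff.mp hb
    filter_upwards [eventually_gt_atTop (max x ν)] with μ hμ
    have hμx : μ ∈ Ioi x := (le_max_left x ν).trans_lt hμ
    refine hbν.trans_le (EReal.coe_le_coe_iff.mpr ?_)
    rw [mul_comm μ]
    exact hA.mul_sub_le_mul_sub_of_hasDerivAt hν (hIoi hμx)
      ((le_max_right x ν).trans hμ.le) (hd μ hμx) (hle μ hμx)
  · filter_upwards [eventually_gt_atTop x] with μ hμ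
    rw [mul_comm μ]
    exact (le_legendre (hIoi hμ)).trans_lt hb

end ConvexOn

theorem stmt11_general (S : Set ℝ) (A A' : ℝ → ℝ)
    (hSconv : Convex ℝ S) (hSint : (interior S).Nonempty)
    (hAconv : ConvexOn ℝ S A)
    (hderiv : ∀ μ ∈ interior S, HasDerivAt A (A' μ) μ)
    (hne : {b : ℝ | legendre S A b ≠ ⊤}.Nonempty)
    (hbdd : BddAbove {b : ℝ | legendre S A b ≠ ⊤})
    (hfin : legendre S A (sSup {b : ℝ | legendre S A b ≠ ⊤}) ≠ ⊤) :
    ¬BddAbove S ∧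
    MonotoneOn A' (interior S) ∧
    Tendsto A' atTop (𝓝 (sSup {b : ℝ | legendre S A b ≠ ⊤})) ∧
    Tendsto (fun μ : ℝ => ((μ * sSup {b : ℝ | legendre S A b ≠ ⊤} - A μ : ℝ) : EReal))
      atTop (𝓝 (legendre S A (sSup {b : ℝ | legendre S A b ≠ ⊤}))) := by
  set β₀ := sSup {b : ℝ | legendre S A b ≠ ⊤}
  obtain ⟨x, hx⟩ := hSint
  obtain ⟨β₁, hβ₁⟩ := hne
  have hunb : ¬BddAbove S := fun hS => by
    have hβ₁le : β₁ ≤ β₀ + 1 := by linarith [le_csSup hbdd hβ₁]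
    linarith [le_csSup hbdd (legendre_ne_top_of_bddAbove_of_le hS hβ₁ hβ₁le)]
  have hIoi := hSconv.Ioi_subset_interior_of_not_bddAbove hx hunb
  have hd : ∀ μ ∈ Ioi x, HasDerivAt A (A' μ) μ := fun μ hμ => hderiv μ (hIoi hμ)
  have hle : ∀ μ ∈ Ioi x, A' μ ≤ β₀ := fun μ hμ => le_csSup hbdd <| by
    show legendre S A (A' μ) ≠ ⊤
    rw [hAconv.legendre_eq_of_hasDerivAt (interior_subset (hIoi hμ)) (hd μ hμ)]
    exact EReal.coe_ne_top _
  have hIoiS : Ioi x ⊆ S := hIoi.trans interior_subset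
  exact ⟨hunb,
    (hAconv.subset interior_subset hSconv.interior).monotoneOn_of_hasDerivAt hderiv,
    hAconv.tendsto_hasDerivAt_atTop (interior_subset hx) hIoiS hd hle hfin,
    hAconv.tendsto_mul_sub_legendre hIoiS hd hle⟩

/-- Let `S ⊆ ℝ` be convex with nonempty interior and `A : ℝ → ℝ` convex on
`S`, differentiable on the interior of `S` (with derivative `A'`) and steep, and let
`D(β) = sup_{μ ∈ S}(βμ − A(μ))`. Suppose `β₀ = sup{β : D(β) < ∞}` is finite (the set is
nonempty and bounded above) and `D(β₀) < ∞`. Then `S` is unbounded above, `A'` increases to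
`β₀` as `μ → +∞` through the interior of `S`, and `μβ₀ − A(μ) → D(β₀)` as `μ → +∞`. -/
theorem stmt11 (S : Set ℝ) (A A' : ℝ → ℝ)
    (hSconv : Convex ℝ S) (hSint : (interior S).Nonempty)
    (hAconv : ConvexOn ℝ S A)
    (hderiv : ∀ μ ∈ interior S, HasDerivAt A (A' μ) μ)
    (hsteep : ∀ μs : ℕ → ℝ, (∀ k, μs k ∈ interior S) → ∀ μ₀ ∈ frontier S,
      Tendsto μs atTop (𝓝 μ₀) → Tendsto (fun k => |A' (μs k)|) atTop atTop)
    (hne : {b : ℝ | legendre S A b ≠ ⊤}.Nonempty)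
    (hbdd : BddAbove {b : ℝ | legendre S A b ≠ ⊤})
    (hfin : legendre S A (sSup {b : ℝ | legendre S A b ≠ ⊤}) ≠ ⊤) :
    ¬BddAbove S ∧
    MonotoneOn A' (interior S) ∧
    Tendsto A' atTop (𝓝 (sSup {b : ℝ | legendre S A b ≠ ⊤})) ∧
    Tendsto (fun μ : ℝ => ((μ * sSup {b : ℝ | legendre S A b ≠ ⊤} - A μ : ℝ) : EReal))
      atTop (𝓝 (legendre S A (sSup {b : ℝ | legendre S A b ≠ ⊤}))) :=
  stmt11_general S A A' hSconv hSint hAconv hderiv hne hbdd hfin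

end
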